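/- arXiv:2403.18059 — 8 statements merged into one kernel-verified Lean document; each statement's English description precedes it below -/
import Mathlib

section
/- A nonnegative combination of monotone set functions sharing a common submodular order π, composed with intersections with fixed subsets of a tail part of the ground set, is monotone with the same submodular order. Precisely: given a ground set M = M₁ ⊔ M₂, monotone functions {f_j}_{j∈J} each having submodular order π, nonnegative weights λ_j, and subsets X_j ⊆ M₂, the function f₀(A ∪ B) := Σ_j λ_j f_j(A ∪ (X_j ∩ B)) for A ⊆ M₁, B ⊆ M₂ is monotone and has submodular order π. -/
/-! Since `M₁ ∪ M₂` is everything and `X j ⊆ M₂`, the defining identity gives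
`f₀ S = ∑ j, lam j * f j ((M₁ ∪ X j) ∩ S)` for every `S`. Intersecting with a fixed set
preserves monotonicity and `π`-nestedness of `B ⊆ A` and the order of `C` after `A`, hence the
submodular order; both properties are stable under nonnegative linear combinations. -/

/-- `π`-submodular order for a set function, where the order is the linear order on `α`:
for π-nested sets `B ⊆ A` (every element of `A \ B` succeeds every element of `B`)
and `C` succeeding `A`, marginals satisfy `f(C|A) ≤ f(C|B)`. -/
def SubmodularOrder {α : Type*} [LinearOrder α] [DecidableEq α] (f : Finset α → ℝ) : Prop :=
  ∀ A B C : Finset α, B ⊆ A →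
    (∀ x ∈ A \ B, ∀ y ∈ B, y < x) →
    (∀ c ∈ C, ∀ x ∈ A, x < c) →
    f (C ∪ A) - f A ≤ f (C ∪ B) - f B

namespace SubmodularOrder

variable {α : Type*} [LinearOrder α] [DecidableEq α]

theorem inter_left {f : Finset α → ℝ} (hf : SubmodularOrder f) (Y : Finset α) :
    SubmodularOrder fun S => f (Y ∩ S) := by
  intro A B C hBA hnest hsucc
  simp only [Finset.inter_union_distrib_left]
  refine hf (Y ∩ A) (Y ∩ B) (Y ∩ C) (Finset.inter_subset_inter_left hBA) ?_ ?_
  · intro x hx y hy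
    simp only [Finset.mem_sdiff, Finset.mem_inter] at hx hy
    exact hnest x (Finset.mem_sdiff.mpr ⟨hx.1.2, fun hxB => hx.2 ⟨hx.1.1, hxB⟩⟩) y hy.2
  · intro c hc x hx
    exact hsucc c (Finset.mem_inter.mp hc).2 x (Finset.mem_inter.mp hx).2

theorem const_mul {f : Finset α → ℝ} (hf : SubmodularOrder f) {c : ℝ} (hc : 0 ≤ c) :
    SubmodularOrder fun S => c * f S := by
  intro A B C hBA hnest hsucc
  simp only [← mul_sub]
  exact mul_le_mul_of_nonneg_left (hf A B C hBA hnest hsucc) hc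

theorem sum {ι : Type*} (s : Finset ι) {f : ι → Finset α → ℝ}
    (hf : ∀ i ∈ s, SubmodularOrder (f i)) :
    SubmodularOrder fun S => ∑ i ∈ s, f i S := by
  intro A B C hBA hnest hsucc
  simp only [← Finset.sum_sub_distrib]
  exact Finset.sum_le_sum fun i hi => hf i hi A B C hBA hnest hsucc

end SubmodularOrder

theorem inter_union_inter_inter_eq_union_inter {α : Type*} [DecidableEq α]
    {S M₁ M₂ X : Finset α} (hS : S ⊆ M₁ ∪ M₂) (hX : X ⊆ M₂) :
    S ∩ M₁ ∪ X ∩ (S ∩ M₂) = (M₁ ∪ X) ∩ S := by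
  ext x
  have := @hS x
  have := @hX x
  simp only [Finset.mem_union, Finset.mem_inter] at *
  tauto

theorem stmt_2_general {α : Type*} [LinearOrder α] [Fintype α] [DecidableEq α]
    {J : Type*} [Fintype J]
    (M₁ M₂ : Finset α) (hcover : M₁ ∪ M₂ = Finset.univ)
    (f : J → Finset α → ℝ)
    (hmono : ∀ j, ∀ S₁ S₂ : Finset α, S₁ ⊆ S₂ → f j S₁ ≤ f j S₂)
    (hso : ∀ j, SubmodularOrder (f j))
    (lam : J → ℝ) (hlam : ∀ j, 0 ≤ lam j)
    (X : J → Finset α) (hX : ∀ j, X j ⊆ M₂)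
    (f₀ : Finset α → ℝ)
    (hf₀ : ∀ A B : Finset α, A ⊆ M₁ → B ⊆ M₂ →
      f₀ (A ∪ B) = ∑ j, lam j * f j (A ∪ (X j ∩ B))) :
    (∀ S₁ S₂ : Finset α, S₁ ⊆ S₂ → f₀ S₁ ≤ f₀ S₂) ∧ SubmodularOrder f₀ := by
  have hrep : f₀ = fun S => ∑ j, lam j * f j ((M₁ ∪ X j) ∩ S) := by
    funext S
    have hsplit : S ∩ M₁ ∪ S ∩ M₂ = S := by
      rw [← Finset.inter_union_distrib_left, hcover, Finset.inter_univ]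
    rw [← hsplit, hf₀ _ _ Finset.inter_subset_right Finset.inter_subset_right, hsplit]
    simp only [inter_union_inter_inter_eq_union_inter (hcover ▸ Finset.subset_univ S) (hX _)]
  subst hrep
  refine ⟨fun S₁ S₂ hS => Finset.sum_le_sum fun j _ => ?_, ?_⟩
  · exact mul_le_mul_of_nonneg_left (hmono j _ _ (Finset.inter_subset_inter_left hS)) (hlam j)
  · exact SubmodularOrder.sum _ fun j _ => ((hso j).inter_left _).const_mul (hlam j)

/-- a nonnegative combination of monotone functions with common submodular
order `π`, composed with intersection with fixed subsets `X j ⊆ M₂` of the tail part `M₂`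
of the ground set `M = M₁ ⊔ M₂`, is monotone with the same submodular order. The function
`f₀` satisfies `f₀(A ∪ B) = Σ_j λ_j f_j (A ∪ (X_j ∩ B))` for `A ⊆ M₁`, `B ⊆ M₂`. -/
theorem stmt_2 {α : Type*} [LinearOrder α] [Fintype α] [DecidableEq α]
    {J : Type*} [Fintype J]
    (M₁ M₂ : Finset α) (hdisj : Disjoint M₁ M₂) (hcover : M₁ ∪ M₂ = Finset.univ)
    (htail : ∀ x ∈ M₂, ∀ y ∈ M₁, y < x)
    (f : J → Finset α → ℝ)
    (hmono : ∀ j, ∀ S₁ S₂ : Finset α, S₁ ⊆ S₂ → f j S₁ ≤ f j S₂)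
    (hso : ∀ j, SubmodularOrder (f j))
    (lam : J → ℝ) (hlam : ∀ j, 0 ≤ lam j)
    (X : J → Finset α) (hX : ∀ j, X j ⊆ M₂)
    (f₀ : Finset α → ℝ)
    (hf₀ : ∀ A B : Finset α, A ⊆ M₁ → B ⊆ M₂ →
      f₀ (A ∪ B) = ∑ j, lam j * f j (A ∪ (X j ∩ B))) :
    (∀ S₁ S₂ : Finset α, S₁ ⊆ S₂ → f₀ S₁ ≤ f₀ S₂) ∧ SubmodularOrder f₀ :=
  stmt_2_general M₁ M₂ hcover f hmono hso lam hlam X hX f₀ hf₀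
end

section
/- In online bipartite matching with a single reusable resource of usage duration d, the function r(S) counting the number of matches of the greedy matching process on arrival set S is monotone: r(B) ≤ r(A) for all B ⊆ A. -/
/-- The greedy matching process for a single reusable resource with usage duration `d`:
given a list of arrival times in increasing order and the time `free` at which the
resource next becomes available (`none` if it has never been matched), count the
number of matched arrivals. -/
noncomputable def matchCount (d : ℝ) : List ℝ → Option ℝ → ℕ
  | [], _ => 0
  | t :: ts, none => 1 + matchCount d ts (some (t + d))
  | t :: ts, some free =>
      if free ≤ t then 1 + matchCount d ts (some (t + d)) else matchCount d ts free

/-- `r S`: number of matches of the matching process run on the arrivals in `S`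
(processed in arrival-index order, i.e., time order). -/
noncomputable def matchReward {n : ℕ} (a : Fin n → ℝ) (d : ℝ) (S : Finset (Fin n)) : ℕ :=
  matchCount d ((S.sort (· ≤ ·)).map a) none

/-!
Record the state of the process as the time `f : WithBot ℝ` from which the resource is free
(`⊥` before the first match). On a time-sorted arrival list the number of matches is antitone
in `f`, and it drops by at most one when the state is replaced by any `c` that is at most
`t + d` for every remaining arrival `t`; the two facts are proved by a simultaneous induction
on the list. Deleting arrivals never helps: whenever the full process matches an arrival `t`,
it moves to state `t + d`, and by the second fact this costs it at most the one match it has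
just gained over the thinned process.
-/

variable {d t : ℝ} {ts l l₁ l₂ : List ℝ}

theorem matchCount_cons (f : WithBot ℝ) :
    matchCount d (t :: ts) f =
      if f ≤ t then matchCount d ts (↑(t + d) : WithBot ℝ) + 1 else matchCount d ts f := by
  cases f <;> simp [matchCount, Nat.add_comm] <;> rfl

theorem coe_add_le_coe_add_of_pairwise_cons (hl : (t :: ts).Pairwise (· ≤ ·)) :
    ∀ s ∈ ts, ((t + d : ℝ) : WithBot ℝ) ≤ ↑(s + d) := fun s hs => by
  exact_mod_cast add_le_add_left (List.rel_of_pairwise_cons hl hs) d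

theorem matchCount_cons_le_of_le (hl : (t :: ts).Pairwise (· ≤ ·))
    (ih_anti : ∀ f g : WithBot ℝ, f ≤ g → matchCount d ts g ≤ matchCount d ts f)
    (ih_reset : ∀ f c : WithBot ℝ, (∀ s ∈ ts, c ≤ ↑(s + d)) →
      matchCount d ts f ≤ matchCount d ts c + 1)
    {f g : WithBot ℝ} (hfg : f ≤ g) :
    matchCount d (t :: ts) g ≤ matchCount d (t :: ts) f := by
  rw [matchCount_cons, matchCount_cons]
  by_cases hg : g ≤ t
  · simp [hg, hfg.trans hg]
  by_cases hf : f ≤ t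
  · simpa [hf, hg] using ih_reset g _ (coe_add_le_coe_add_of_pairwise_cons hl)
  · simpa [hf, hg] using ih_anti f g hfg

theorem matchCount_cons_le_add_one (hl : (t :: ts).Pairwise (· ≤ ·))
    (ih_anti : ∀ f g : WithBot ℝ, f ≤ g → matchCount d ts g ≤ matchCount d ts f)
    (ih_reset : ∀ f c : WithBot ℝ, (∀ s ∈ ts, c ≤ ↑(s + d)) →
      matchCount d ts f ≤ matchCount d ts c + 1)
    (f : WithBot ℝ) {c : WithBot ℝ} (hc : ∀ s ∈ t :: ts, c ≤ ↑(s + d)) :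
    matchCount d (t :: ts) f ≤ matchCount d (t :: ts) c + 1 := by
  have h_anti_head := ih_anti c _ (hc t List.mem_cons_self)
  have h_reset_head := ih_reset f _ (coe_add_le_coe_add_of_pairwise_cons hl)
  have h_reset_tail := ih_reset f c fun s hs => hc s (List.mem_cons_of_mem t hs)
  rw [matchCount_cons, matchCount_cons]
  split_ifs <;> omega

theorem matchCount_antitone_and_le_add_one (hl : l.Pairwise (· ≤ ·)) :
    (∀ f g : WithBot ℝ, f ≤ g → matchCount d l g ≤ matchCount d l f) ∧
    (∀ f c : WithBot ℝ, (∀ s ∈ l, c ≤ ↑(s + d)) →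
      matchCount d l f ≤ matchCount d l c + 1) := by
  induction l with
  | nil => simp [matchCount]
  | cons t ts ih =>
    obtain ⟨ih_anti, ih_reset⟩ := ih hl.of_cons
    exact ⟨fun _ _ => matchCount_cons_le_of_le hl ih_anti ih_reset,
      fun f _ => matchCount_cons_le_add_one hl ih_anti ih_reset f⟩

theorem matchCount_le_add_one (hl : l.Pairwise (· ≤ ·)) (f : WithBot ℝ) {c : WithBot ℝ}
    (hc : ∀ s ∈ l, c ≤ ↑(s + d)) : matchCount d l f ≤ matchCount d l c + 1 :=
  (matchCount_antitone_and_le_add_one hl).2 f c hc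

theorem matchCount_le_of_sublist (h : l₁.Sublist l₂) (hl : l₂.Pairwise (· ≤ ·)) :
    ∀ {f₁ f₂ : WithBot ℝ}, f₂ ≤ f₁ → matchCount d l₁ f₁ ≤ matchCount d l₂ f₂ := by
  induction h with
  | slnil => simp [matchCount]
  | @cons l₁ ts t h ih =>
    intro f₁ f₂ hf
    have h_reset := matchCount_le_add_one (d := d) (hl.of_cons.sublist h) f₁
      fun s hs => coe_add_le_coe_add_of_pairwise_cons hl s (h.subset hs)
    have h_tail := ih hl.of_cons (le_refl (↑(t + d) : WithBot ℝ))
    rw [matchCount_cons]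
    split_ifs
    · omega
    · exact ih hl.of_cons hf
  | @cons_cons ts₁ ts t h ih =>
    intro f₁ f₂ hf
    have h_reset := matchCount_le_add_one (d := d) (hl.of_cons.sublist h) f₁
      fun s hs => coe_add_le_coe_add_of_pairwise_cons hl s (h.subset hs)
    have h_tail := ih hl.of_cons (le_refl (↑(t + d) : WithBot ℝ))
    rw [matchCount_cons, matchCount_cons]
    split_ifs with hf₁ hf₂ hf₂
    · omega
    · exact absurd (hf.trans hf₁) hf₂
    · omega
    · exact ih hl.of_cons hf

theorem Finset.sort_sublist_sort_of_subset {α : Type*} [LinearOrder α] {s t : Finset α}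
    (h : s ⊆ t) : (s.sort (· ≤ ·)).Sublist (t.sort (· ≤ ·)) :=
  List.sublist_of_subperm_of_pairwise
    ((s.sort_nodup _).subperm fun x hx => by simpa using h (by simpa using hx))
    (s.pairwise_sort _) (t.pairwise_sort _)

theorem stmt_4_general {n : ℕ} (a : Fin n → ℝ) (ha : StrictMono a) (d : ℝ)
    (A B : Finset (Fin n)) (hBA : B ⊆ A) :
    matchReward a d B ≤ matchReward a d A :=
  matchCount_le_of_sublist ((Finset.sort_sublist_sort_of_subset hBA).map a)
    ((A.pairwise_sort _).map a fun _ _ h => ha.monotone h) (le_refl (⊥ : WithBot ℝ))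

/-- the matching-count function of a single reusable resource is monotone. -/
theorem stmt_4 {n : ℕ} (a : Fin n → ℝ) (ha : StrictMono a) (d : ℝ) (hd : 0 ≤ d)
    (A B : Finset (Fin n)) (hBA : B ⊆ A) :
    matchReward a d B ≤ matchReward a d A :=
  stmt_4_general a ha d A B hBA
end

section
/- In online bipartite matching with a single reusable resource of usage duration d, the arrival (time) order is a submodular order for the matching-count function r: for time-nested sets B ⊆ A ⊆ T (every element of A∖B arrives after every element of B) and any C ⊆ T arriving entirely after A, r(C∪A) − r(A) ≤ r(C∪B) − r(B). -/
lemma Finset.sort_union_of_forall_lt {α : Type*} [LinearOrder α] {s t : Finset α}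
    (h : ∀ x ∈ s, ∀ y ∈ t, x < y) : (s ∪ t).sort = s.sort ++ t.sort := by
  have hsorted : (s.sort ++ t.sort).Pairwise (· ≤ ·) :=
    List.pairwise_append.2 ⟨s.pairwise_sort _, t.pairwise_sort _, fun x hx y hy =>
      (h x (s.mem_sort _ |>.1 hx) y (t.mem_sort _ |>.1 hy)).le⟩
  have hnodup : (s.sort ++ t.sort).Nodup :=
    List.nodup_append.2 ⟨s.sort_nodup _, t.sort_nodup _, fun x hx y hy =>
      (h x (s.mem_sort _ |>.1 hx) y (t.mem_sort _ |>.1 hy)).ne⟩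
  simpa [List.toFinset_append] using (List.toFinset_sort (· ≤ ·) hnodup).2 hsorted

lemma StrictMono.pairwise_lt_map_sort {α β : Type*} [LinearOrder α] [Preorder β] {f : α → β}
    (hf : StrictMono f) (s : Finset α) : (s.sort.map f).Pairwise (· < ·) :=
  s.sortedLT_sort.pairwise.map f fun _ _ h => hf h

lemma Option.le_trans {α : Type*} [Preorder α] {s t u : Option α} (hst : s ≤ t) (htu : t ≤ u) :
    s ≤ u := by
  cases s <;> cases t <;> cases u <;> simp_all
  exact hst.trans htu

section MatchingProcess

variable {d : ℝ}

/-- The state of the resource after the process, encoded as in `matchCount`: `none` if it is free,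
`some f` if it is busy until `f`. -/
noncomputable def matchState (d : ℝ) : List ℝ → Option ℝ → Option ℝ
  | [], s => s
  | t :: ts, none => matchState d ts (some (t + d))
  | t :: ts, some free =>
      if free ≤ t then matchState d ts (some (t + d)) else matchState d ts (some free)

lemma matchCount_cons_of_le {u : ℝ} {ts : List ℝ} {s : Option ℝ} (h : s ≤ some u) :
    matchCount d (u :: ts) s = 1 + matchCount d ts (some (u + d)) := by
  cases s with
  | none => rfl
  | some f => exact if_pos (Option.some_le_some.1 h)

lemma matchCount_cons_of_not_le {u : ℝ} {ts : List ℝ} {s : Option ℝ} (h : ¬ s ≤ some u) :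
    matchCount d (u :: ts) s = matchCount d ts s := by
  cases s with
  | none => exact absurd Option.none_le h
  | some f => exact if_neg (mt Option.some_le_some.2 h)

lemma matchState_cons_of_le {u : ℝ} {ts : List ℝ} {s : Option ℝ} (h : s ≤ some u) :
    matchState d (u :: ts) s = matchState d ts (some (u + d)) := by
  cases s with
  | none => rfl
  | some f => exact if_pos (Option.some_le_some.1 h)

lemma matchState_cons_of_not_le {u : ℝ} {ts : List ℝ} {s : Option ℝ} (h : ¬ s ≤ some u) :
    matchState d (u :: ts) s = matchState d ts s := by
  cases s with
  | none => exact absurd Option.none_le h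
  | some f => exact if_neg (mt Option.some_le_some.2 h)

lemma matchCount_append (L₁ L₂ : List ℝ) (s : Option ℝ) :
    matchCount d (L₁ ++ L₂) s = matchCount d L₁ s + matchCount d L₂ (matchState d L₁ s) := by
  induction L₁ generalizing s with
  | nil => simp [matchCount, matchState]
  | cons u ts ih =>
    by_cases h : s ≤ some u
    · rw [List.cons_append, matchCount_cons_of_le h, matchCount_cons_of_le h,
        matchState_cons_of_le h, ih]
      omega
    · rw [List.cons_append, matchCount_cons_of_not_le h, matchCount_cons_of_not_le h,
        matchState_cons_of_not_le h, ih]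

lemma matchState_append (L₁ L₂ : List ℝ) (s : Option ℝ) :
    matchState d (L₁ ++ L₂) s = matchState d L₂ (matchState d L₁ s) := by
  induction L₁ generalizing s with
  | nil => rfl
  | cons u ts ih =>
    by_cases h : s ≤ some u
    · rw [List.cons_append, matchState_cons_of_le h, matchState_cons_of_le h, ih]
    · rw [List.cons_append, matchState_cons_of_not_le h, matchState_cons_of_not_le h, ih]

lemma le_matchState (hd : 0 ≤ d) (L : List ℝ) (s : Option ℝ) : s ≤ matchState d L s := by
  induction L generalizing s with
  | nil => cases s <;> simp [matchState]
  | cons u ts ih =>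
    by_cases h : s ≤ some u
    · rw [matchState_cons_of_le h]
      exact Option.le_trans (Option.le_trans h (Option.some_le_some.2 (by linarith))) (ih _)
    · rw [matchState_cons_of_not_le h]
      exact ih s

/-- The hypothesis `s ≤ some (u + d)` for every later arrival `u` says that the resource was last
matched before all of them. -/
lemma matchState_le_of_pairwise {L₁ L₂ : List ℝ} (hL : (L₁ ++ L₂).Pairwise (· < ·))
    {s : Option ℝ} (hs : ∀ u ∈ L₁ ++ L₂, s ≤ some (u + d)) :
    ∀ v ∈ L₂, matchState d L₁ s ≤ some (v + d) := by
  induction L₁ generalizing s with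
  | nil => exact hs
  | cons u ts ih =>
    rw [List.cons_append, List.pairwise_cons] at hL
    by_cases h : s ≤ some u
    · rw [matchState_cons_of_le h]
      exact ih hL.2 fun v hv => Option.some_le_some.2 (by linarith [hL.1 v hv])
    · rw [matchState_cons_of_not_le h]
      exact ih hL.2 fun v hv => hs v (List.mem_cons_of_mem u hv)

/-- The second bound keeps the induction going when only the earlier state matches the next
arrival `u`: the other state frees the resource by `u + d`, so it is ahead afterwards. -/
lemma matchCount_le_and_le_succ_of_le {L : List ℝ} (hL : L.Pairwise (· < ·)) {s s' : Option ℝ}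
    (hs' : ∀ u ∈ L, s' ≤ some (u + d)) (h : s ≤ s') :
    matchCount d L s' ≤ matchCount d L s ∧ matchCount d L s ≤ matchCount d L s' + 1 := by
  induction L generalizing s s' with
  | nil => simp [matchCount]
  | cons u ts ih =>
    rw [List.pairwise_cons] at hL
    have hs'ts : ∀ v ∈ ts, s' ≤ some (v + d) := fun v hv => hs' v (List.mem_cons_of_mem u hv)
    by_cases hsu : s ≤ some u <;> by_cases hs'u : s' ≤ some u
    · rw [matchCount_cons_of_le hsu, matchCount_cons_of_le hs'u]
      omega
    · have hmatched : ∀ v ∈ ts, some (u + d) ≤ some (v + d) :=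
        fun v hv => Option.some_le_some.2 (by linarith [hL.1 v hv])
      have hahead := ih hL.2 hmatched (hs' u List.mem_cons_self)
      rw [matchCount_cons_of_le hsu, matchCount_cons_of_not_le hs'u]
      omega
    · exact absurd (Option.le_trans h hs'u) hsu
    · rw [matchCount_cons_of_not_le hsu, matchCount_cons_of_not_le hs'u]
      exact ih hL.2 hs'ts h

lemma matchCount_append_append_add_le (hd : 0 ≤ d) {L₁ L₂ L₃ : List ℝ}
    (hL : (L₁ ++ L₂ ++ L₃).Pairwise (· < ·)) :
    matchCount d (L₁ ++ L₂ ++ L₃) none + matchCount d L₁ none ≤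
      matchCount d (L₁ ++ L₃) none + matchCount d (L₁ ++ L₂) none := by
  have hvalid := matchState_le_of_pairwise (d := d) hL fun _ _ => Option.none_le
  rw [matchState_append] at hvalid
  have hfewer := (matchCount_le_and_le_succ_of_le (hL.sublist (List.sublist_append_right _ L₃))
    hvalid (le_matchState hd L₂ (matchState d L₁ none))).1
  simp only [matchCount_append, matchState_append]
  omega

end MatchingProcess

/-- the arrival order is a submodular order for the matching-count function:
for time-nested `B ⊆ A` and `C` arriving entirely after `A`,
`r(C∪A) − r(A) ≤ r(C∪B) − r(B)`. -/
theorem stmt_5 {n : ℕ} (a : Fin n → ℝ) (ha : StrictMono a) (d : ℝ) (hd : 0 ≤ d)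
    (A B C : Finset (Fin n)) (hBA : B ⊆ A)
    (hnest : ∀ x ∈ A \ B, ∀ y ∈ B, y < x)
    (hC : ∀ c ∈ C, ∀ x ∈ A, x < c) :
    (matchReward a d (C ∪ A) : ℝ) - matchReward a d A ≤
      (matchReward a d (C ∪ B) : ℝ) - matchReward a d B := by
  have hsortA : A.sort = B.sort ++ (A \ B).sort := by
    rw [← Finset.sort_union_of_forall_lt fun y hy x hx => hnest x hx y hy,
      Finset.union_sdiff_of_subset hBA]
  have hsortCA : (C ∪ A).sort = A.sort ++ C.sort := by
    rw [Finset.union_comm, Finset.sort_union_of_forall_lt fun x hx c hc => hC c hc x hx]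
  have hsortCB : (C ∪ B).sort = B.sort ++ C.sort := by
    rw [Finset.union_comm, Finset.sort_union_of_forall_lt fun x hx c hc => hC c hc x (hBA hx)]
  have hsorted := ha.pairwise_lt_map_sort (C ∪ A)
  rw [hsortCA, hsortA] at hsorted
  simp only [List.map_append] at hsorted
  have key := matchCount_append_append_add_le hd hsorted
  simp only [matchReward, hsortCA, hsortCB, hsortA, List.map_append]
  rw [sub_le_sub_iff]
  exact_mod_cast key
end

section
/- The reusable-resource reward function is not submodular: there exist arrival times and a duration d such that the matching-count function r on three arrivals {1,2,3} satisfies r({1})=r({2})=r({3})=r({1,2})=r({2,3})=1 and r({1,3})=r({1,2,3})=2, and this function violates submodularity since r({1,2,3}) − r({2,3}) > r({1,2}) − r({2}). -/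
/-! With `d = 3/2`, the match at time 1 blocks the resource during `[1, 5/2)`, so it
rejects the arrival at time 2 but is free again at time 3. Adding 1 to `{2, 3}` thus creates
a second match (1 and 3), whereas adding 1 to `{2}` merely replaces the match at 2: the
marginal gain of 1 grows on the larger set. -/

section FinsetSort

variable {α : Type*} [LinearOrder α]

theorem Finset.sort_pair {i j : α} (hij : i < j) :
    ({i, j} : Finset α).sort (· ≤ ·) = [i, j] := by
  rw [Finset.sort_insert _ (by simpa using hij.le) (by simpa using hij.ne), Finset.sort_singleton]

theorem Finset.sort_triple {i j k : α} (hij : i < j) (hjk : j < k) :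
    ({i, j, k} : Finset α).sort (· ≤ ·) = [i, j, k] := by
  have hik := hij.trans hjk
  rw [Finset.sort_insert _ (by simp [hij.le, hik.le]) (by simp [hij.ne, hik.ne]),
    Finset.sort_pair hjk]

end FinsetSort

namespace matchCount

variable {d t free : ℝ} {ts : List ℝ}

theorem nil (d : ℝ) (state : Option ℝ) : matchCount d [] state = 0 := by
  rw [matchCount]

theorem cons_none : matchCount d (t :: ts) none = 1 + matchCount d ts (some (t + d)) := by
  rw [matchCount]

theorem cons_some_of_le (h : free ≤ t) :
    matchCount d (t :: ts) (some free) = 1 + matchCount d ts (some (t + d)) := by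
  rw [matchCount, if_pos h]

theorem cons_some_of_lt (h : t < free) :
    matchCount d (t :: ts) (some free) = matchCount d ts (some free) := by
  rw [matchCount, if_neg h.not_ge]

end matchCount

namespace matchReward

variable {n : ℕ} {a : Fin n → ℝ} {d : ℝ} {i j k : Fin n}

theorem singleton (a : Fin n → ℝ) (d : ℝ) (i : Fin n) : matchReward a d {i} = 1 := by
  rw [matchReward, Finset.sort_singleton, List.map_singleton, matchCount.cons_none,
    matchCount.nil]

theorem pair_of_lt (hij : i < j) (h : a j < a i + d) : matchReward a d {i, j} = 1 := by
  rw [matchReward, Finset.sort_pair hij, List.map_cons, List.map_singleton, matchCount.cons_none,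
    matchCount.cons_some_of_lt h, matchCount.nil]

theorem pair_of_le (hij : i < j) (h : a i + d ≤ a j) : matchReward a d {i, j} = 2 := by
  rw [matchReward, Finset.sort_pair hij, List.map_cons, List.map_singleton, matchCount.cons_none,
    matchCount.cons_some_of_le h, matchCount.nil]

theorem triple_of_lt_of_le (hij : i < j) (hjk : j < k) (hj : a j < a i + d)
    (hk : a i + d ≤ a k) : matchReward a d {i, j, k} = 2 := by
  rw [matchReward, Finset.sort_triple hij hjk, List.map_cons, List.map_cons, List.map_singleton,
    matchCount.cons_none, matchCount.cons_some_of_lt hj, matchCount.cons_some_of_le hk,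
    matchCount.nil]

end matchReward

/-- with duration `d = 3/2` and arrival times `1, 2, 3`, the
matching-count function `r` takes the stated values and is not submodular:
`r({1,2,3}) − r({2,3}) > r({1,2}) − r({2})`. -/
theorem stmt_6 :
    ∃ (a : Fin 3 → ℝ) (d : ℝ), StrictMono a ∧
    a = ![1, 2, 3] ∧ d = 3/2 ∧
    (let r : Finset (Fin 3) → ℕ := matchReward a d
     r {0} = 1 ∧ r {1} = 1 ∧ r {2} = 1 ∧ r {0, 1} = 1 ∧ r {1, 2} = 1 ∧
     r {0, 2} = 2 ∧ r {0, 1, 2} = 2 ∧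
     r {0, 1, 2} - r {1, 2} > r {0, 1} - r {1}) := by
  set a : Fin 3 → ℝ := ![1, 2, 3]
  refine ⟨a, 3/2, ?_, rfl, rfl, ?_⟩
  · norm_num [Fin.strictMono_iff_lt_succ, Fin.forall_fin_two, a]
  have r01 : matchReward a (3/2) {0, 1} = 1 :=
    matchReward.pair_of_lt (by decide) (by norm_num [a, Matrix.cons_val_two])
  have r12 : matchReward a (3/2) {1, 2} = 1 :=
    matchReward.pair_of_lt (by decide) (by norm_num [a, Matrix.cons_val_two])
  have r02 : matchReward a (3/2) {0, 2} = 2 :=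
    matchReward.pair_of_le (by decide) (by norm_num [a, Matrix.cons_val_two])
  have r012 : matchReward a (3/2) {0, 1, 2} = 2 :=
    matchReward.triple_of_lt_of_le (by decide) (by decide)
      (by norm_num [a, Matrix.cons_val_two]) (by norm_num [a, Matrix.cons_val_two])
  refine ⟨matchReward.singleton _ _ _, matchReward.singleton _ _ _, matchReward.singleton _ _ _,
    r01, r12, r02, r012, ?_⟩
  rw [r012, r12, r01, matchReward.singleton]
  decide
end

section
/- Greedy is 1/2-competitive for online submodular order welfare maximization with configurations: if at each arrival t Greedy selects a configuration maximizing the total marginal value Σ_i f_i(e | ALG(t)) over e ∈ N_t, then the final Greedy value Σ_i f_i(ALG) is at least half the value Σ_i f_i(OPT) of any feasible allocation OPT choosing one configuration per arrival. -/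
/-!
Greedy builds `A_k = {ALG_s : s < k}`; let `O_k = {o_s : s ≥ k}` be the part of the competing
allocation still to arrive, and `F = Σ_i f_i`. The potential `Φ_k = F(A_k ∪ O_k) + F(A_k)`
starts at `Φ_0 = F(OPT)` (as `F ∅ = 0`) and ends at `Φ_n = 2 F(ALG)`, and it never decreases:
at arrival `t = k`, since `o_t` arrives after `A_k` and before `O_{k+1}`, the submodular order
inequality gives `F(A_k ∪ O_k) - F(A_k + o_t) ≤ F(A_k ∪ O_{k+1}) - F(A_k)`, the greedy choice
gives `F(A_k + o_t) ≤ F(A_{k+1})`, and monotonicity gives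
`F(A_k ∪ O_{k+1}) ≤ F(A_{k+1} ∪ O_{k+1})`.
-/
/-- `lt`-submodular order for a set function w.r.t. a strict order relation `lt`. -/
def SubmodOrderRel {α : Type*} [DecidableEq α] (lt : α → α → Prop) (f : Finset α → ℝ) : Prop :=
  ∀ A B C : Finset α, B ⊆ A →
    (∀ x ∈ A \ B, ∀ y ∈ B, lt y x) →
    (∀ c ∈ C, ∀ x ∈ A, lt x c) →
    f (C ∪ A) - f A ≤ f (C ∪ B) - f B

open Finset Function

theorem exists_isStrictTotalOrder_extending {α β : Type*} [LinearOrder β] (τ : α → β) :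
    ∃ lt : α → α → Prop, IsStrictTotalOrder α lt ∧ ∀ x y, τ x < τ y → lt x y :=
  ⟨(· < ·) on fun x => toLex (τ x, embeddingToCardinal x),
    Injective.isStrictTotalOrder_onFun _ fun _ _ hxy =>
      embeddingToCardinal.injective (congrArg (fun p => (ofLex p).2) hxy),
    fun _ _ h => Prod.Lex.toLex_lt_toLex.mpr (Or.inl h)⟩

section SubmodOrderRel

variable {α : Type*} [DecidableEq α] {lt : α → α → Prop}

theorem SubmodOrderRel.sum {ι : Type*} (s : Finset ι) {f : ι → Finset α → ℝ}
    (hf : ∀ i ∈ s, SubmodOrderRel lt (f i)) : SubmodOrderRel lt fun S => ∑ i ∈ s, f i S := by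
  intro A B C hBA hAB hCA
  simp only [← sum_sub_distrib]
  exact sum_le_sum fun i hi => hf i hi A B C hBA hAB hCA

theorem SubmodOrderRel.sub_insert_le {f : Finset α → ℝ} (hf : SubmodOrderRel lt f)
    {x : α} {B C : Finset α} (hB : ∀ y ∈ B, lt y x)
    (hC : ∀ c ∈ C, ∀ y ∈ insert x B, lt y c) :
    f (C ∪ insert x B) - f (insert x B) ≤ f (C ∪ B) - f B :=
  hf _ _ _ (subset_insert x B)
    (fun y hy z hz => by
      obtain ⟨rfl | hyB, hy⟩ := by simpa only [mem_sdiff, mem_insert] using hy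
      · exact hB z hz
      · exact absurd hyB hy)
    hC

end SubmodOrderRel

section PrefixSuffix

variable {α : Type*} [DecidableEq α] {n : ℕ} (g : Fin n → α)

def prefixImage (k : ℕ) : Finset α := (univ.filter fun s : Fin n => (s : ℕ) < k).image g

def suffixImage (k : ℕ) : Finset α := (univ.filter fun s : Fin n => k ≤ (s : ℕ)).image g

@[simp]
theorem prefixImage_zero : prefixImage g 0 = ∅ := by simp [prefixImage]

@[simp]
theorem prefixImage_self : prefixImage g n = univ.image g := by simp [prefixImage]

@[simp]
theorem suffixImage_zero : suffixImage g 0 = univ.image g := by simp [suffixImage]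

@[simp]
theorem suffixImage_self : suffixImage g n = ∅ := by
  simp [suffixImage, filter_false_of_mem fun (s : Fin n) _ => not_le.mpr s.isLt]

theorem prefixImage_succ (t : Fin n) :
    prefixImage g (t + 1) = insert (g t) (prefixImage g t) := by
  rw [prefixImage, prefixImage, ← image_insert]
  congr 1
  ext s
  simp only [mem_insert, mem_filter, mem_univ, true_and, Fin.ext_iff]
  omega

theorem suffixImage_eq_insert (t : Fin n) :
    suffixImage g t = insert (g t) (suffixImage g (t + 1)) := by
  rw [suffixImage, suffixImage, ← image_insert]
  congr 1
  ext s
  simp only [mem_insert, mem_filter, mem_univ, true_and, Fin.ext_iff]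
  omega

variable {g} {τ : α → Fin n} {k : ℕ} {e : α}

theorem lt_of_mem_prefixImage (hτ : ∀ t, τ (g t) = t) (he : e ∈ prefixImage g k) :
    (τ e : ℕ) < k := by
  obtain ⟨s, hs, rfl⟩ := mem_image.mp he
  simpa [hτ] using hs

theorem le_of_mem_suffixImage (hτ : ∀ t, τ (g t) = t) (he : e ∈ suffixImage g k) :
    k ≤ (τ e : ℕ) := by
  obtain ⟨s, hs, rfl⟩ := mem_image.mp he
  simpa [hτ] using hs

end PrefixSuffix

section Greedy

variable {α : Type*} [DecidableEq α] {n : ℕ} {τ : α → Fin n} {lt : α → α → Prop}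
  {F : Finset α → ℝ} {ALG o : Fin n → α}

theorem greedy_potential_step (hF : Monotone F) (hso : SubmodOrderRel lt F)
    (hlt : ∀ x y, τ x < τ y → lt x y) (hALG : ∀ t, τ (ALG t) = t) (ho : ∀ t, τ (o t) = t)
    (t : Fin n) (hgreedy : F (insert (o t) (prefixImage ALG t)) ≤ F (prefixImage ALG (t + 1))) :
    F (prefixImage ALG t ∪ suffixImage o t) + F (prefixImage ALG t) ≤
      F (prefixImage ALG (t + 1) ∪ suffixImage o (t + 1)) + F (prefixImage ALG (t + 1)) := by
  set A := prefixImage ALG t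
  set C := suffixImage o (t + 1)
  have hlt_val : ∀ x y, (τ x : ℕ) < τ y → lt x y := fun x y h => hlt x y h
  have hexchange : F (C ∪ insert (o t) A) - F (insert (o t) A) ≤ F (C ∪ A) - F A := by
    refine hso.sub_insert_le (fun y hy => hlt_val _ _ ?_) fun c hc y hy => hlt_val _ _ ?_
    · simpa [ho] using lt_of_mem_prefixImage hALG hy
    · have hc := le_of_mem_suffixImage ho hc
      rcases mem_insert.mp hy with rfl | hy
      · simp only [ho] at hc ⊢; omega
      · have := lt_of_mem_prefixImage hALG hy; omega
  have hunion : C ∪ insert (o t) A = A ∪ suffixImage o t := by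
    rw [suffixImage_eq_insert, union_comm, insert_union, union_insert]
  have hgrow : F (C ∪ A) ≤ F (prefixImage ALG (t + 1) ∪ C) :=
    hF (by rw [prefixImage_succ, union_comm]; exact union_subset_union_left (subset_insert _ _))
  rw [hunion] at hexchange
  linarith

theorem greedy_two_mul_ge (hF : Monotone F) (hso : SubmodOrderRel lt F)
    (hlt : ∀ x y, τ x < τ y → lt x y) (hALG : ∀ t, τ (ALG t) = t) (ho : ∀ t, τ (o t) = t)
    (hgreedy : ∀ t : Fin n,
      F (insert (o t) (prefixImage ALG t)) ≤ F (prefixImage ALG (t + 1))) :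
    F (univ.image o) + F ∅ ≤ 2 * F (univ.image ALG) := by
  set Φ : ℕ → ℝ := fun k =>
    F (prefixImage ALG k ∪ suffixImage o k) + F (prefixImage ALG k)
  have hstep : ∀ k ∈ range n, 0 ≤ Φ (k + 1) - Φ k := fun k hk =>
    sub_nonneg.mpr <| greedy_potential_step hF hso hlt hALG ho ⟨k, mem_range.mp hk⟩ (hgreedy _)
  have hΦ := sum_range_sub Φ n ▸ sum_nonneg hstep
  simp only [Φ, prefixImage_zero, prefixImage_self, suffixImage_zero, suffixImage_self,
    empty_union, union_empty] at hΦ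
  linarith

end Greedy

theorem stmt_8_general {α : Type*} [Fintype α] [DecidableEq α] {ι : Type*} [Fintype ι]
    (n : ℕ) (τ : α → Fin n)
    (N : Fin n → Finset α) (hN : ∀ t, N t = Finset.univ.filter (fun e => τ e = t))
    (f : ι → Finset α → ℝ)
    (hzero : ∀ i, f i ∅ = 0)
    (hmono : ∀ i, ∀ S₁ S₂ : Finset α, S₁ ⊆ S₂ → f i S₁ ≤ f i S₂)
    (hso : ∀ lt : α → α → Prop, IsStrictTotalOrder α lt →
      (∀ x y, τ x < τ y → lt x y) → ∀ i, SubmodOrderRel lt (f i))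
    (ALG : Fin n → α) (hALGmem : ∀ t, ALG t ∈ N t)
    (hgreedy : ∀ t, ∀ e ∈ N t,
      ∑ i, (f i (insert e ((Finset.univ.filter (fun s => s < t)).image ALG)) -
            f i ((Finset.univ.filter (fun s => s < t)).image ALG)) ≤
      ∑ i, (f i (insert (ALG t) ((Finset.univ.filter (fun s => s < t)).image ALG)) -
            f i ((Finset.univ.filter (fun s => s < t)).image ALG)))
    (o : Fin n → α) (ho : ∀ t, o t ∈ N t) :
    ∑ i, f i (Finset.univ.image ALG) ≥ (1 / 2) * ∑ i, f i (Finset.univ.image o) := by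
  obtain ⟨lt, hlt_sto, hlt⟩ := exists_isStrictTotalOrder_extending τ
  have harrival : ∀ {g : Fin n → α}, (∀ t, g t ∈ N t) → ∀ t, τ (g t) = t := fun hg t => by
    simpa [hN] using hg t
  have hgreedy_o : ∀ t, ∑ i, f i (insert (o t) (prefixImage ALG t)) ≤
      ∑ i, f i (prefixImage ALG (t + 1)) := fun t => by
    have h := hgreedy t (o t) (ho t)
    rw [sum_sub_distrib, sum_sub_distrib, sub_le_sub_iff_right] at h
    rwa [prefixImage_succ]
  have hbound := greedy_two_mul_ge (F := fun S => ∑ i, f i S)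
    (fun _ _ hST => sum_le_sum fun i _ => hmono i _ _ hST)
    (SubmodOrderRel.sum univ fun i _ => hso lt hlt_sto hlt i) hlt
    (harrival hALGmem) (harrival ho) hgreedy_o
  simp only [hzero, sum_const_zero, add_zero] at hbound
  linarith

/-- Greedy is 1/2-competitive for online submodular order welfare
maximization with configurations. Arrivals are `t : Fin n`, configurations `e : α`
with `τ e` the arrival of configuration `e` and `N t` the configurations of arrival `t`;
each `f i` is nonnegative monotone with `f i ∅ = 0`, modular within each `N t`, and every
arrival-consistent total order is a submodular order for `f i`. Greedy picks
`ALG t ∈ N t` maximizing total marginal value; then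
`Σ_i f_i(ALG) ≥ (1/2)·Σ_i f_i(OPT)` for any allocation `o` with one configuration
per arrival. -/
theorem stmt_8 {α : Type*} [Fintype α] [DecidableEq α] {ι : Type*} [Fintype ι]
    (n : ℕ) (τ : α → Fin n)
    (N : Fin n → Finset α) (hN : ∀ t, N t = Finset.univ.filter (fun e => τ e = t))
    (f : ι → Finset α → ℝ)
    (hnonneg : ∀ i S, 0 ≤ f i S)
    (hzero : ∀ i, f i ∅ = 0)
    (hmono : ∀ i, ∀ S₁ S₂ : Finset α, S₁ ⊆ S₂ → f i S₁ ≤ f i S₂)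
    (hso : ∀ lt : α → α → Prop, IsStrictTotalOrder α lt →
      (∀ x y, τ x < τ y → lt x y) → ∀ i, SubmodOrderRel lt (f i))
    (hmod : ∀ i t, ∀ S : Finset α, Disjoint S (N t) →
      f i (N t ∪ S) = f i S + ∑ e ∈ N t, (f i (insert e S) - f i S))
    (ALG : Fin n → α) (hALGmem : ∀ t, ALG t ∈ N t)
    (hgreedy : ∀ t, ∀ e ∈ N t,
      ∑ i, (f i (insert e ((Finset.univ.filter (fun s => s < t)).image ALG)) -
            f i ((Finset.univ.filter (fun s => s < t)).image ALG)) ≤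
      ∑ i, (f i (insert (ALG t) ((Finset.univ.filter (fun s => s < t)).image ALG)) -
            f i ((Finset.univ.filter (fun s => s < t)).image ALG)))
    (o : Fin n → α) (ho : ∀ t, o t ∈ N t) :
    ∑ i, f i (Finset.univ.image ALG) ≥ (1 / 2) * ∑ i, f i (Finset.univ.image o) :=
  stmt_8_general n τ N hN f hzero hmono hso ALG hALGmem hgreedy o ho
end

section
/- Marginal value of the expected-value function under independent activation: for g(S) := Σ_{Z⊆N} γ(Z,N) f(Z∩S) where γ(X,S) = Π_{e∈X} p_e Π_{e∈S∖X}(1−p_e), and any e ∈ N, S ⊆ N∖{e}, it holds that g(S∪{e}) − g(S) = Σ_{X⊆S} γ(X∪{e}, S∪{e}) · [f(X∪{e}) − f(X)] = p_e · Σ_{X⊆S} γ(X,S) [f(X∪{e}) − f(X)]. -/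
/-! Restricting to the coordinates in `S` marginalises out the independent coins outside `S`,
so `g S = Σ_{X ⊆ S} γ(X,S) f(X)`. Adding `e ∉ S` splits each outcome on `S ∪ {e}` by the coin of
`e`, which contributes a factor `p_e` or `1 - p_e`; subtracting `g S` leaves exactly
`p_e · Σ_{X ⊆ S} γ(X,S) (f(X ∪ {e}) - f(X))`. -/

open Finset

/-- `γ X S = Π_{e∈X} p_e · Π_{e∈S∖X} (1−p_e)`: probability that exactly `X` is active in `S`. -/
def activeProb {α : Type*} [DecidableEq α] (p : α → ℝ) (X S : Finset α) : ℝ :=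
  (∏ e ∈ X, p e) * ∏ e ∈ S \ X, (1 - p e)

section ActiveProb

variable {α : Type*} [DecidableEq α] (p : α → ℝ) {e : α} {X S : Finset α}

lemma activeProb_insert_right (he : e ∉ S) (hX : X ⊆ S) :
    activeProb p X (insert e S) = (1 - p e) * activeProb p X S := by
  have heX : e ∉ S \ X := fun h => he (mem_sdiff.mp h).1
  rw [activeProb, activeProb, insert_sdiff_of_notMem _ (fun h => he (hX h)), prod_insert heX]
  ring

lemma activeProb_insert_insert (he : e ∉ S) (hX : X ⊆ S) :
    activeProb p (insert e X) (insert e S) = p e * activeProb p X S := by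
  rw [activeProb, activeProb, insert_sdiff_insert, sdiff_insert_of_notMem he,
    prod_insert (fun h => he (hX h))]
  ring

lemma sum_powerset_insert_activeProb_mul (he : e ∉ S) (h : Finset α → ℝ) :
    ∑ X ∈ (insert e S).powerset, activeProb p X (insert e S) * h X =
      ∑ X ∈ S.powerset,
        ((1 - p e) * (activeProb p X S * h X) + p e * (activeProb p X S * h (insert e X))) := by
  rw [sum_powerset_insert he, ← sum_add_distrib]
  refine sum_congr rfl fun X hX => ?_
  rw [activeProb_insert_right p he (mem_powerset.mp hX),
    activeProb_insert_insert p he (mem_powerset.mp hX)]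
  ring

lemma sum_powerset_union_activeProb_mul_inter (h : Finset α → ℝ) (A B : Finset α)
    (hAB : Disjoint A B) :
    ∑ Z ∈ (A ∪ B).powerset, activeProb p Z (A ∪ B) * h (Z ∩ A) =
      ∑ X ∈ A.powerset, activeProb p X A * h X := by
  induction B using Finset.induction_on with
  | empty =>
    rw [union_empty]
    exact sum_congr rfl fun X hX => by rw [inter_eq_left.mpr (mem_powerset.mp hX)]
  | @insert b B hbB ih =>
    have hbA : b ∉ A := fun hb => disjoint_left.mp hAB hb (mem_insert_self b B)
    have hb : b ∉ A ∪ B := by simp [hbA, hbB]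
    rw [union_insert, sum_powerset_insert_activeProb_mul p hb]
    -- the coin of `b` is invisible to `h (· ∩ A)`, so its two outcomes recombine with weight 1
    simp_rw [insert_inter_of_notMem hbA, ← add_mul, sub_add_cancel, one_mul]
    exact ih (hAB.mono_right (subset_insert b B))

lemma sum_powerset_univ_activeProb_mul_inter [Fintype α] (h : Finset α → ℝ) (T : Finset α) :
    ∑ Z ∈ (univ : Finset α).powerset, activeProb p Z univ * h (Z ∩ T) =
      ∑ X ∈ T.powerset, activeProb p X T * h X := by
  rw [← union_compl T]
  exact sum_powerset_union_activeProb_mul_inter p h T Tᶜ disjoint_compl_right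

end ActiveProb

theorem stmt_11_general {α : Type*} [Fintype α] [DecidableEq α]
    (p : α → ℝ)
    (f : Finset α → ℝ)
    (g : Finset α → ℝ)
    (hg : ∀ S : Finset α, g S = ∑ Z ∈ (Finset.univ : Finset α).powerset,
      activeProb p Z Finset.univ * f (Z ∩ S))
    (e : α) (S : Finset α) (he : e ∉ S) :
    g (insert e S) - g S =
      ∑ X ∈ S.powerset, activeProb p (insert e X) (insert e S) * (f (insert e X) - f X) ∧
    g (insert e S) - g S =
      p e * ∑ X ∈ S.powerset, activeProb p X S * (f (insert e X) - f X) := by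
  have marginal : g (insert e S) - g S =
      p e * ∑ X ∈ S.powerset, activeProb p X S * (f (insert e X) - f X) := by
    rw [hg, hg, sum_powerset_univ_activeProb_mul_inter, sum_powerset_univ_activeProb_mul_inter,
      sum_powerset_insert_activeProb_mul p he, mul_sum, ← sum_sub_distrib]
    exact sum_congr rfl fun X _ => by ring
  refine ⟨?_, marginal⟩
  rw [marginal, mul_sum]
  refine sum_congr rfl fun X hX => ?_
  rw [activeProb_insert_insert p he (mem_powerset.mp hX)]
  ring

/-- marginal value of the expected-value function under independent
activation: for `g(S) = Σ_{Z⊆N} γ(Z,N) f(Z∩S)` and `e ∉ S`,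
`g(S∪{e}) − g(S) = Σ_{X⊆S} γ(X∪{e},S∪{e})·[f(X∪{e})−f(X)]
               = p_e · Σ_{X⊆S} γ(X,S)·[f(X∪{e})−f(X)]`. -/
theorem stmt_11 {α : Type*} [Fintype α] [DecidableEq α]
    (p : α → ℝ) (hp : ∀ e, 0 ≤ p e ∧ p e ≤ 1)
    (f : Finset α → ℝ)
    (g : Finset α → ℝ)
    (hg : ∀ S : Finset α, g S = ∑ Z ∈ (Finset.univ : Finset α).powerset,
      activeProb p Z Finset.univ * f (Z ∩ S))
    (e : α) (S : Finset α) (he : e ∉ S) :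
    g (insert e S) - g S =
      ∑ X ∈ S.powerset, activeProb p (insert e X) (insert e S) * (f (insert e X) - f X) ∧
    g (insert e S) - g S =
      p e * ∑ X ∈ S.powerset, activeProb p X S * (f (insert e X) - f X) :=
  stmt_11_general p f g hg e S he
end

section
/- If a function f on ground set N = ∪_{t∈T} N_t (with the N_t pairwise disjoint) admits one arrival-consistent submodular order π and is modular within each N_t (f(N_t ∪ S) = f(S) + Σ_{e∈N_t} f(e|S) for S ⊆ N∖N_t), then every arrival-consistent total order over N is also a submodular order for f. -/
/-!
Write `f(e | S) = f(insert e S) - f(S)`. Along an arrival-consistent submodular order `π`, the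
marginal of `e` over a base `T` is at most its marginal over the part of `T` lying in blocks
strictly before the block of `e`, because that part is a `π`-initial segment of `T ∪ {e}`.
Modularity of a block `N_t` upgrades this to an equality when `T` adds only elements of the
block of `e`: the marginal of the whole block telescopes through any ordering of its elements,
each term is bounded by a singleton marginal, and modularity says the bounds add up to exactly
the block's marginal, so none of them can be strict. Hence a marginal depends only on the
earlier blocks of the base and can only drop when later blocks are added. These two facts are
all that a nested triple `B ⊆ A`, `C` for an arbitrary arrival-consistent order needs: peel off
the elements of `A \ B` latest block first; each step compares the marginal of the peeled element
over a base with and without `C`.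
-/

open Finset

section

variable {α : Type*} [DecidableEq α] {f : Finset α → ℝ}

theorem sub_le_sum_of_marginal_le {g : α → ℝ} (T R : Finset α)
    (h : ∀ r ∈ R, ∀ U ⊆ R, r ∉ U → f (insert r (U ∪ T)) - f (U ∪ T) ≤ g r) :
    f (R ∪ T) - f T ≤ ∑ r ∈ R, g r := by
  induction R using Finset.induction_on with
  | empty => simp
  | insert a R haR ih =>
    have hstep := h a (mem_insert_self a R) R (subset_insert a R) haR
    have hrest := ih fun r hr U hU => h r (mem_insert_of_mem hr) U (hU.trans (subset_insert a R))
    rw [sum_insert haR, insert_union]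
    linarith

theorem SubmodOrderRel.marginal_le_of_initial {π : α → α → Prop} [IsTrans α π]
    [Std.Trichotomous π] (hf : SubmodOrderRel π f) {S T : Finset α} {e : α}
    (hST : S ⊆ T) (heT : e ∉ T) (hS : ∀ s ∈ S, ∀ x ∈ insert e T, x ∉ S → π s x) :
    f (insert e T) - f T ≤ f (insert e S) - f S := by
  classical
  -- `P` sits between `S` and `e`, `K` after `e`: move `K` past `e`, then drop `P`.
  set P := (T \ S).filter (π · e)
  set K := (T \ S).filter (¬ π · e)
  have hP : ∀ x ∈ P, x ∈ T \ S ∧ π x e := fun x hx => mem_filter.mp hx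
  have hK : ∀ c ∈ K, c ∈ T \ S ∧ π e c := by
    intro c hc
    obtain ⟨hcTS, hce⟩ := mem_filter.mp hc
    refine ⟨hcTS, ?_⟩
    rcases trichotomous_of π c e with h | rfl | h
    · exact absurd h hce
    · exact absurd (mem_sdiff.mp hcTS).1 heT
    · exact h
  have hSe : ∀ s ∈ S, π s e :=
    fun s hs => hS s hs e (mem_insert_self e T) fun h => heT (hST h)
  have hSTS : ∀ s ∈ S, ∀ x ∈ T \ S, π s x := fun s hs x hx =>
    hS s hs x (mem_insert_of_mem (mem_sdiff.mp hx).1) (mem_sdiff.mp hx).2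
  have hfar : f (K ∪ insert e (S ∪ P)) - f (insert e (S ∪ P))
      ≤ f (K ∪ (S ∪ P)) - f (S ∪ P) := by
    refine hf _ _ _ (subset_insert e _) ?_ ?_
    · intro x hx y hy
      rw [mem_sdiff, mem_insert] at hx
      obtain rfl := hx.1.resolve_right hx.2
      rcases mem_union.mp hy with hy | hy
      · exact hSe y hy
      · exact (hP y hy).2
    · intro c hc x hx
      rcases mem_insert.mp hx with rfl | hx
      · exact (hK c hc).2
      rcases mem_union.mp hx with hx | hx
      · exact hSTS x hx c (hK c hc).1
      · exact trans_of π (hP x hx).2 (hK c hc).2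
  have hnear : f ({e} ∪ (S ∪ P)) - f (S ∪ P) ≤ f ({e} ∪ S) - f S := by
    refine hf _ _ _ subset_union_left ?_ ?_
    · intro x hx y hy
      obtain ⟨hxSP, hxS⟩ := mem_sdiff.mp hx
      exact hSTS y hy x (hP x ((mem_union.mp hxSP).resolve_left hxS)).1
    · intro c hc x hx
      rw [mem_singleton.mp hc]
      rcases mem_union.mp hx with hx | hx
      · exact hSe x hx
      · exact (hP x hx).2
  have hT : K ∪ (S ∪ P) = T := by
    ext x
    simp only [K, P, mem_union, mem_filter, mem_sdiff]
    constructor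
    · rintro (⟨⟨h, -⟩, -⟩ | h | ⟨⟨h, -⟩, -⟩)
      exacts [h, hST h, h]
    · intro h
      by_cases hxS : x ∈ S <;> tauto
  rw [union_insert, hT] at hfar
  rw [← insert_eq, ← insert_eq] at hnear
  linarith

variable {ι : Type*} [LinearOrder ι] {τ : α → ι} {π : α → α → Prop}

theorem SubmodOrderRel.marginal_le_of_block_le [IsTrans α π] [Std.Trichotomous π]
    (hf : SubmodOrderRel π f) (hcons : ∀ x y, τ x < τ y → π x y) {S T : Finset α} {e : α}
    (hST : S ⊆ T) (heT : e ∉ T) (hS : ∀ s ∈ S, τ s < τ e)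
    (hT : ∀ t ∈ T \ S, τ e ≤ τ t) :
    f (insert e T) - f T ≤ f (insert e S) - f S := by
  refine hf.marginal_le_of_initial hST heT fun s hs x hx hxS => hcons s x ?_
  rcases mem_insert.mp hx with rfl | hx
  · exact hS s hs
  · exact (hS s hs).trans_le (hT x (mem_sdiff.mpr ⟨hx, hxS⟩))

theorem SubmodOrderRel.sub_le_sum_marginal_of_block [IsTrans α π] [Std.Trichotomous π]
    (hf : SubmodOrderRel π f) (hcons : ∀ x y, τ x < τ y → π x y) {v : ι}
    {R S T : Finset α} (hR : ∀ r ∈ R, τ r = v) (hRT : Disjoint R T) (hST : S ⊆ T)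
    (hS : ∀ s ∈ S, τ s < v) (hT : ∀ t ∈ T \ S, v ≤ τ t) :
    f (R ∪ T) - f T ≤ ∑ r ∈ R, (f (insert r S) - f S) := by
  refine sub_le_sum_of_marginal_le T R fun r hr U hUR hrU => ?_
  refine hf.marginal_le_of_block_le hcons (hST.trans subset_union_right) ?_
    (fun s hs => hR r hr ▸ hS s hs) fun t ht => ?_
  · rw [mem_union, not_or]
    exact ⟨hrU, disjoint_left.mp hRT hr⟩
  · obtain ⟨htUT, htS⟩ := mem_sdiff.mp ht
    rw [hR r hr]
    rcases mem_union.mp htUT with htU | htT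
    · exact (hR t (hUR htU)).ge
    · exact hT t (mem_sdiff.mpr ⟨htT, htS⟩)

theorem SubmodOrderRel.marginal_eq_of_block [IsTrans α π] [Std.Trichotomous π]
    (hf : SubmodOrderRel π f) (hcons : ∀ x y, τ x < τ y → π x y)
    (N : ι → Finset α) (hN : ∀ t e, e ∈ N t ↔ τ e = t)
    (hmod : ∀ t, ∀ S : Finset α, Disjoint S (N t) →
      f (N t ∪ S) = f S + ∑ e ∈ N t, (f (insert e S) - f S))
    {S T : Finset α} {x : α} (hST : S ⊆ T) (hxT : x ∉ T) (hS : ∀ s ∈ S, τ s < τ x)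
    (hT : ∀ t ∈ T \ S, τ t = τ x) :
    f (insert x T) - f T = f (insert x S) - f S := by
  refine le_antisymm (hf.marginal_le_of_block_le hcons hST hxT hS fun t ht => (hT t ht).ge) ?_
  -- Split the block of `x` as `R ∪ {x} ∪ Z` and telescope its marginal over `S` in that order.
  set Z := T \ S
  set R := N (τ x) \ insert x Z
  have hxZ : x ∉ Z := fun h => hxT (mem_sdiff.mp h).1
  have hZN : insert x Z ⊆ N (τ x) := by
    intro z hz
    rw [hN]
    rcases mem_insert.mp hz with rfl | hz
    exacts [rfl, hT z hz]
  have hSN : Disjoint S (N (τ x)) :=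
    disjoint_left.mpr fun s hs hsN => (hS s hs).ne ((hN _ _).mp hsN)
  have hsplit : N (τ x) ∪ S = R ∪ insert x T := by
    ext y
    have hyS := @hST y
    have hyZ := @hZN y
    simp only [R, Z, mem_union, mem_sdiff, mem_insert] at hyZ ⊢
    tauto
  have hRT : Disjoint R (insert x T) := by
    refine disjoint_left.mpr fun r hr hrxT => ?_
    obtain ⟨hrN, hrxZ⟩ := mem_sdiff.mp hr
    rcases mem_insert.mp hrxT with rfl | hrT
    · exact hrxZ (mem_insert_self r Z)
    · by_cases hrS : r ∈ S
      · exact disjoint_left.mp hSN hrS hrN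
      · exact hrxZ (mem_insert_of_mem (mem_sdiff.mpr ⟨hrT, hrS⟩))
  have hxT_ge : ∀ t ∈ insert x T \ S, τ x ≤ τ t := by
    intro t ht
    obtain ⟨htxT, htS⟩ := mem_sdiff.mp ht
    rcases mem_insert.mp htxT with rfl | htT
    exacts [le_rfl, (hT t (mem_sdiff.mpr ⟨htT, htS⟩)).ge]
  have hRbound := hf.sub_le_sum_marginal_of_block hcons
    (fun r hr => (hN _ _).mp (mem_sdiff.mp hr).1) hRT (hST.trans (subset_insert x T)) hS hxT_ge
  have hZbound := hf.sub_le_sum_marginal_of_block hcons hT sdiff_disjoint subset_rfl hS (by simp)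
  rw [sdiff_union_of_subset hST] at hZbound
  have hsum := sum_sdiff hZN (f := fun e => f (insert e S) - f S)
  rw [sum_insert hxZ] at hsum
  have hmodx := hmod (τ x) S hSN
  rw [hsplit] at hmodx
  linarith

theorem SubmodOrderRel.sub_le_sub_of_block_le [IsTrans α π] [Std.Trichotomous π]
    (hf : SubmodOrderRel π f) (hcons : ∀ x y, τ x < τ y → π x y)
    (N : ι → Finset α) (hN : ∀ t e, e ∈ N t ↔ τ e = t)
    (hmod : ∀ t, ∀ S : Finset α, Disjoint S (N t) →
      f (N t ∪ S) = f S + ∑ e ∈ N t, (f (insert e S) - f S))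
    {A B C : Finset α} (hBA : B ⊆ A) (hCA : Disjoint C A)
    (hB : ∀ a ∈ A \ B, ∀ b ∈ B, τ b ≤ τ a)
    (hC : ∀ c ∈ C, ∀ a ∈ A, τ a ≤ τ c) :
    f (C ∪ A) - f A ≤ f (C ∪ B) - f B := by
  have hBD : Disjoint B (A \ B) := disjoint_sdiff
  rw [← union_sdiff_of_subset hBA] at hCA hC ⊢
  generalize A \ B = D at hBD hB hCA hC ⊢
  induction D using induction_on_max_value τ with
  | empty => simp
  | insert d D hdD hmax ih =>
    have hdD' : d ∈ B ∪ insert d D := mem_union_right B (mem_insert_self d D)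
    have hDsub : B ∪ D ⊆ B ∪ insert d D := union_subset_union_right (subset_insert d D)
    have hle_d : ∀ a ∈ B ∪ D, τ a ≤ τ d := by
      intro a ha
      rcases mem_union.mp ha with hab | had
      exacts [hB d (mem_insert_self d D) a hab, hmax a had]
    have hdBD : d ∉ B ∪ D := by
      rw [mem_union, not_or]
      exact ⟨disjoint_right.mp hBD (mem_insert_self d D), hdD⟩
    have hdC : d ∉ C := disjoint_right.mp hCA hdD'
    set S := (B ∪ D).filter (τ · < τ d)
    have hS : ∀ s ∈ S, τ s < τ d := fun s hs => (mem_filter.mp hs).2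
    have hge_d : ∀ t ∈ B ∪ D, t ∉ S → τ d ≤ τ t :=
      fun t ht htS => not_lt.mp fun h => htS (mem_filter.mpr ⟨ht, h⟩)
    have hmarg_eq := hf.marginal_eq_of_block hcons N hN hmod (filter_subset _ _) hdBD hS
      fun t ht => le_antisymm (hle_d t (mem_sdiff.mp ht).1)
        (hge_d t (mem_sdiff.mp ht).1 (mem_sdiff.mp ht).2)
    have hmarg_le := hf.marginal_le_of_block_le hcons
      ((filter_subset _ _).trans subset_union_right) (fun h => (mem_union.mp h).elim hdC hdBD) hS
      fun t ht => by
        obtain ⟨htCBD, htS⟩ := mem_sdiff.mp ht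
        rcases mem_union.mp htCBD with htC | htBD
        exacts [hC t htC d hdD', hge_d t htBD htS]
    have hIH := ih (hBD.mono_right (subset_insert d D)) (fun a ha => hB a (mem_insert_of_mem ha))
      (hCA.mono_right hDsub) fun c hc a ha => hC c hc a (hDsub ha)
    rw [union_insert, union_insert]
    linarith

end

/-- if `f` on ground set `N = ⊔_t N_t` (blocks given by `τ`) admits one
arrival-consistent submodular order and is modular within each block `N_t`, then every
arrival-consistent total order over `N` is a submodular order for `f`. -/
theorem stmt_13 {α : Type*} [Fintype α] [DecidableEq α]
    (n : ℕ) (τ : α → Fin n)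
    (N : Fin n → Finset α) (hN : ∀ t, N t = Finset.univ.filter (fun e => τ e = t))
    (f : Finset α → ℝ)
    (hmod : ∀ t, ∀ S : Finset α, Disjoint S (N t) →
      f (N t ∪ S) = f S + ∑ e ∈ N t, (f (insert e S) - f S))
    (π : α → α → Prop) (hπtot : IsStrictTotalOrder α π)
    (hπcons : ∀ x y, τ x < τ y → π x y)
    (hπso : SubmodOrderRel π f) :
    ∀ lt : α → α → Prop, IsStrictTotalOrder α lt →
      (∀ x y, τ x < τ y → lt x y) → SubmodOrderRel lt f := by
  intro lt hlt hcons A B C hBA hnest hsucc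
  have := hπtot
  have := hlt
  have hτ_le : ∀ x y, lt x y → τ x ≤ τ y :=
    fun x y hxy => not_lt.mp fun hyx => asymm hxy (hcons y x hyx)
  exact hπso.sub_le_sub_of_block_le hπcons N (fun t e => by simp [hN]) hmod hBA
    (disjoint_left.mpr fun c hcC hcA => irrefl c (hsucc c hcC c hcA))
    (fun a ha b hb => hτ_le b a (hnest a ha b hb)) fun c hc a ha => hτ_le a c (hsucc c hc a ha)
end

section
/- Key OSOW inequality used in the Greedy analysis: let f be monotone with f(∅)=0 on ground set N with submodular order given by the arrival order, let ALG(t) = {a_1,…,a_{t−1}} with a_τ ∈ N_τ, and let o_t ∈ N_t for each t. Then f(∪_t {o_t}) ≤ f(∪_t {a_t}) + Σ_{t∈T} [f({o_t} ∪ ALG(t)) − f(ALG(t))]. -/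
open Finset

theorem SubmodOrderRel.le_add_marginal {α : Type*} [DecidableEq α] {lt : α → α → Prop}
    {f : Finset α → ℝ} (hso : SubmodOrderRel lt f) (hmono : Monotone f)
    {A C : Finset α} {x : α} (y : α) (hA : ∀ z ∈ A, lt z x)
    (hC : ∀ c ∈ C, ∀ z ∈ insert x A, lt z c) :
    f (C ∪ insert x A) ≤ f (C ∪ insert y A) + (f (insert x A) - f A) := by
  have hexch := hso (insert x A) A C (subset_insert x A)
    (fun z hz w hw => by
      obtain ⟨hz, hzA⟩ := mem_sdiff.mp hz
      obtain rfl := (mem_insert.mp hz).resolve_right hzA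
      exact hA w hw) hC
  have := hmono (union_subset_union_right (subset_insert y A) : C ∪ A ⊆ C ∪ insert y A)
  linarith

section Hybrid

variable {α : Type*} [DecidableEq α] {n : ℕ}

def imageBelow (a : Fin n → α) (m : ℕ) : Finset α :=
  (univ.filter fun s : Fin n => (s : ℕ) < m).image a

def imageFrom (o : Fin n → α) (m : ℕ) : Finset α :=
  (univ.filter fun s : Fin n => m ≤ (s : ℕ)).image o

theorem imageBelow_zero (a : Fin n → α) : imageBelow a 0 = ∅ := by
  simp [imageBelow]

theorem imageBelow_self (a : Fin n → α) : imageBelow a n = univ.image a := by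
  simp [imageBelow]

theorem imageFrom_zero (o : Fin n → α) : imageFrom o 0 = univ.image o := by
  simp [imageFrom]

theorem imageFrom_self (o : Fin n → α) : imageFrom o n = ∅ := by
  simp [imageFrom]

theorem imageBelow_succ (a : Fin n → α) (t : Fin n) :
    imageBelow a (t + 1) = insert (a t) (imageBelow a t) := by
  ext x; simp [imageBelow, le_iff_eq_or_lt, Fin.val_inj, or_and_right, exists_or, eq_comm]

theorem imageFrom_eq_insert (o : Fin n → α) (t : Fin n) :
    imageFrom o t = insert (o t) (imageFrom o (t + 1)) := by
  ext x
  simp [imageFrom, Nat.le_iff_lt_or_eq, Fin.val_inj, or_and_right, exists_or, eq_comm, or_comm]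

variable {τ : α → Fin n} {a o : Fin n → α}

theorem lt_of_mem_imageBelow (ha : ∀ t, τ (a t) = t) {m : ℕ} {z : α} (hz : z ∈ imageBelow a m) :
    (τ z : ℕ) < m := by
  obtain ⟨s, hs, rfl⟩ := mem_image.mp hz
  simpa [ha] using hs

theorem le_of_mem_imageFrom (ho : ∀ t, τ (o t) = t) {m : ℕ} {z : α} (hz : z ∈ imageFrom o m) :
    m ≤ (τ z : ℕ) := by
  obtain ⟨s, hs, rfl⟩ := mem_image.mp hz
  simpa [ho] using hs

theorem hybrid_le_succ_add_marginal {f : Finset α → ℝ}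
    (hso : SubmodOrderRel (fun x y => τ x < τ y) f) (hmono : Monotone f)
    (ha : ∀ t, τ (a t) = t) (ho : ∀ t, τ (o t) = t) (t : Fin n) :
    f (imageBelow a t ∪ imageFrom o t) ≤ f (imageBelow a (t + 1) ∪ imageFrom o (t + 1)) +
      (f (insert (o t) (imageBelow a t)) - f (imageBelow a t)) := by
  have hA : ∀ z ∈ imageBelow a t, τ z < τ (o t) := fun z hz => by
    rw [ho, Fin.lt_def]; exact lt_of_mem_imageBelow ha hz
  have hC : ∀ c ∈ imageFrom o (t + 1), ∀ z ∈ insert (o t) (imageBelow a t), τ z < τ c := by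
    intro c hc z hz
    have hc := le_of_mem_imageFrom ho hc
    rcases mem_insert.mp hz with rfl | hz
    · rw [Fin.lt_def, ho]; omega
    · have := lt_of_mem_imageBelow ha hz
      rw [Fin.lt_def]; omega
  have key := hso.le_add_marginal hmono (a t) hA hC
  rwa [imageFrom_eq_insert o t, imageBelow_succ, union_insert, ← insert_union,
    union_comm (insert (o t) _), union_comm (insert (a t) _)]

end Hybrid

theorem le_add_sum_of_le_succ_add {n : ℕ} {g : ℕ → ℝ} {c : Fin n → ℝ}
    (h : ∀ t : Fin n, g t ≤ g (t + 1) + c t) : g 0 ≤ g n + ∑ t, c t :=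
  calc g 0 = g n + ∑ t : Fin n, (g t - g (t + 1)) := by
        rw [Fin.sum_univ_eq_sum_range (fun i => g i - g (i + 1)), sum_range_sub']; ring
    _ ≤ g n + ∑ t, c t := by gcongr with t; linarith [h t]

theorem stmt_15_general {α : Type*} [Fintype α] [DecidableEq α]
    (n : ℕ) (τ : α → Fin n)
    (N : Fin n → Finset α) (hN : ∀ t, N t = Finset.univ.filter (fun e => τ e = t))
    (f : Finset α → ℝ)
    (hmono : ∀ S₁ S₂ : Finset α, S₁ ⊆ S₂ → f S₁ ≤ f S₂)
    (hso : SubmodOrderRel (fun x y => τ x < τ y) f)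
    (a o : Fin n → α) (ha : ∀ t, a t ∈ N t) (ho : ∀ t, o t ∈ N t) :
    f (Finset.univ.image o) ≤ f (Finset.univ.image a) +
      ∑ t, (f (insert (o t) ((Finset.univ.filter (fun s => s < t)).image a)) -
            f ((Finset.univ.filter (fun s => s < t)).image a)) := by
  have hτa : ∀ t, τ (a t) = t := fun t => by simpa [hN] using ha t
  have hτo : ∀ t, τ (o t) = t := fun t => by simpa [hN] using ho t
  have htele := le_add_sum_of_le_succ_add (g := fun m => f (imageBelow a m ∪ imageFrom o m))
    (hybrid_le_succ_add_marginal hso (fun _ _ h => hmono _ _ h) hτa hτo)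
  simp only [imageBelow_zero, imageFrom_zero, imageBelow_self, imageFrom_self, empty_union,
    union_empty] at htele
  -- `imageBelow a t` is `ALG(t)` by definition, since `<` on `Fin n` compares values.
  exact htele

/-- key OSOW inequality used in the Greedy analysis. For `f` monotone with
`f ∅ = 0`, submodular on the arrival order (elements of later arrivals succeed those of
earlier arrivals, blocks given by `τ`), with `a t, o t ∈ N t` and
`ALG(t) = {a_1,…,a_{t−1}}`, we have
`f(∪_t {o_t}) ≤ f(∪_t {a_t}) + Σ_t [f({o_t} ∪ ALG(t)) − f(ALG(t))]`. -/
theorem stmt_15 {α : Type*} [Fintype α] [DecidableEq α]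
    (n : ℕ) (τ : α → Fin n)
    (N : Fin n → Finset α) (hN : ∀ t, N t = Finset.univ.filter (fun e => τ e = t))
    (f : Finset α → ℝ)
    (hmono : ∀ S₁ S₂ : Finset α, S₁ ⊆ S₂ → f S₁ ≤ f S₂)
    (hzero : f ∅ = 0)
    (hso : SubmodOrderRel (fun x y => τ x < τ y) f)
    (a o : Fin n → α) (ha : ∀ t, a t ∈ N t) (ho : ∀ t, o t ∈ N t) :
    f (Finset.univ.image o) ≤ f (Finset.univ.image a) +
      ∑ t, (f (insert (o t) ((Finset.univ.filter (fun s => s < t)).image a)) -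
            f ((Finset.univ.filter (fun s => s < t)).image a)) :=
  stmt_15_general n τ N hN f hmono hso a o ha ho
end
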